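/- Let n be a positive integer and let x, y_1, …, y_n be vectors in H. Then ∑_{i=1}^n |(x, y_i)|^2 ≤ ‖x‖ · max_{1≤i≤n} |(x, y_i)| · (∑_{i=1}^n ∑_{j=1}^n |(y_i, y_j)|)^{1/2}. -/

import Mathlib

/-!
Put `z = ∑ i, cᵢ • y i` with `cᵢ = ⟪y i, x⟫`. Then `⟪x, z⟫ = ∑ i, |⟪x, y i⟫|²`, so Cauchy–Schwarz gives
`∑ i, |⟪x, y i⟫|² ≤ ‖x‖ ‖z‖`. Expanding `‖z‖² = ∑ i, ∑ j, conj cᵢ cⱼ ⟪y i, y j⟫` and bounding every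
coefficient `|cᵢ|` by `M = maxᵢ |⟪x, y i⟫|` yields `‖z‖ ≤ M (∑ i, ∑ j, |⟪y i, y j⟫|)^{1/2}`.
-/

open Finset RCLike ComplexConjugate

section

variable {𝕜 E ι : Type*} [RCLike 𝕜] [NormedAddCommGroup E] [InnerProductSpace 𝕜 E]

local notation "⟪" x ", " y "⟫" => inner 𝕜 x y

theorem inner_sum_inner_smul_self (s : Finset ι) (x : E) (y : ι → E) :
    ⟪x, ∑ i ∈ s, ⟪y i, x⟫ • y i⟫ = ((∑ i ∈ s, ‖⟪x, y i⟫‖ ^ 2 : ℝ) : 𝕜) := by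
  push_cast
  refine (inner_sum _ _ _).trans (sum_congr rfl fun i _ => ?_)
  rw [inner_smul_right, ← inner_conj_symm, RCLike.conj_mul]

theorem sum_norm_inner_sq_le_norm_mul_norm (s : Finset ι) (x : E) (y : ι → E) :
    ∑ i ∈ s, ‖⟪x, y i⟫‖ ^ 2 ≤ ‖x‖ * ‖∑ i ∈ s, ⟪y i, x⟫ • y i‖ := by
  have h := re_inner_le_norm (𝕜 := 𝕜) x (∑ i ∈ s, ⟪y i, x⟫ • y i)
  rwa [inner_sum_inner_smul_self, ofReal_re] at h

theorem norm_sum_smul_sq_le (s : Finset ι) (c : ι → 𝕜) (y : ι → E) {M : ℝ}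
    (hc : ∀ i ∈ s, ‖c i‖ ≤ M) :
    ‖∑ i ∈ s, c i • y i‖ ^ 2 ≤ M ^ 2 * ∑ i ∈ s, ∑ j ∈ s, ‖⟪y i, y j⟫‖ := by
  have expand : ⟪∑ i ∈ s, c i • y i, ∑ j ∈ s, c j • y j⟫
      = ∑ i ∈ s, ∑ j ∈ s, conj (c i) * (c j * ⟪y i, y j⟫) := by
    refine (sum_inner _ _ _).trans (sum_congr rfl fun i _ => ?_)
    rw [inner_smul_left, inner_sum, mul_sum]
    simp only [inner_smul_right]
  rw [← inner_self_eq_norm_sq (𝕜 := 𝕜), expand, mul_sum]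
  refine (re_le_norm _).trans ((norm_sum_le _ _).trans (sum_le_sum fun i hi => ?_))
  rw [mul_sum]
  refine (norm_sum_le _ _).trans (sum_le_sum fun j hj => ?_)
  rw [norm_mul, norm_mul, norm_conj, sq, mul_assoc]
  have hM : 0 ≤ M := (norm_nonneg _).trans (hc i hi)
  gcongr
  exacts [hc i hi, hc j hj]

theorem norm_sum_smul_le (s : Finset ι) (c : ι → 𝕜) (y : ι → E) {M : ℝ} (hM : 0 ≤ M)
    (hc : ∀ i ∈ s, ‖c i‖ ≤ M) :
    ‖∑ i ∈ s, c i • y i‖ ≤ M * √(∑ i ∈ s, ∑ j ∈ s, ‖⟪y i, y j⟫‖) := by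
  rw [← Real.sqrt_sq hM, ← Real.sqrt_mul (sq_nonneg M), Real.le_sqrt (norm_nonneg _)
    (by positivity)]
  exact norm_sum_smul_sq_le s c y hc

end

theorem stmt_17 {H : Type*} [NormedAddCommGroup H] [InnerProductSpace ℂ H]
    {n : ℕ} (hn : 0 < n) (x : H) (y : Fin n → H) :
    (∑ i, (‖(inner ℂ x (y i) : ℂ)‖) ^ 2) ≤ ‖x‖ * (Finset.univ.sup' (Finset.univ_nonempty_iff.mpr (Fin.pos_iff_nonempty.mp hn)) (fun i => ‖(inner ℂ x (y i) : ℂ)‖)) * (∑ i, ∑ j, ‖(inner ℂ (y i) (y j) : ℂ)‖) ^ ((1 : ℝ) / 2) := by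
  set M := Finset.univ.sup' (Finset.univ_nonempty_iff.mpr (Fin.pos_iff_nonempty.mp hn))
    (fun i => ‖(inner ℂ x (y i) : ℂ)‖)
  have hc : ∀ i ∈ univ, ‖(inner ℂ (y i) x : ℂ)‖ ≤ M := fun i hi =>
    norm_inner_symm (𝕜 := ℂ) (y i) x ▸ le_sup' (fun i => ‖(inner ℂ x (y i) : ℂ)‖) hi
  have hM : 0 ≤ M := (norm_nonneg _).trans (hc _ (mem_univ ⟨0, hn⟩))
  calc ∑ i, ‖(inner ℂ x (y i) : ℂ)‖ ^ 2
      ≤ ‖x‖ * ‖∑ i, (inner ℂ (y i) x : ℂ) • y i‖ := sum_norm_inner_sq_le_norm_mul_norm _ x y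
    _ ≤ ‖x‖ * (M * √(∑ i, ∑ j, ‖(inner ℂ (y i) (y j) : ℂ)‖)) := by
      gcongr
      exact norm_sum_smul_le _ _ y hM hc
    _ = _ := by rw [Real.sqrt_eq_rpow, mul_assoc]
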